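/- Uniform wave-packet bound for admissible observation operators (Proposition 4.4): Suppose C is bounded and admissible, and let ε > 0. Then there exists M > 0 such that for every μ ≥ 0 and every z ∈ X₂ supported in {k : |μ − λ k| ≥ ε}, ‖C z‖² ≤ M · Σ_k (λ k − μ)² |z k|². -/

import Mathlib

/-!
For finitely supported `z`, let `ν k = λ k - μ` and `F t = (1 - t) • C (zEvol ν z t)`. Then
`F 0 = C z`, `F 1 = 0` and `F' t = -C (zEvol ν z t) + (1 - t) • i • C (zEvol ν (ν z) t)`.
Shifting all frequencies by `μ` multiplies `zEvol` by a unimodular scalar, so integrating `F'` over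
`[0, 1]`, Cauchy–Schwarz and admissibility at `T = 1` give
`‖C z‖² ≤ 2K (‖z‖² + ‖(λ - μ) z‖²)`, and the gap `ε ≤ |λ k - μ|` on the support gives
`‖z‖² ≤ ε⁻² ‖(λ - μ) z‖²`. A general `z ∈ X₂` is the limit in `X₂` of its finite truncations,
and boundedness of `C` carries the bound to the limit.
-/

open scoped BigOperators

/-- Membership in `X₂`: the sequence of coefficients against eigenvalues squared is summable. -/
def MemX2 (lam : ℕ → ℝ) (z : ℕ → ℂ) : Prop :=
  Summable fun k => (lam k)^2 * ‖z k‖^2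

/-- Time evolution `z(t) k = exp(i t λ_k) z₀ k` of the diagonal Schrödinger group. -/
noncomputable def zEvol (lam : ℕ → ℝ) (z0 : ℕ → ℂ) (t : ℝ) : ℕ → ℂ :=
  fun k => Complex.exp (Complex.I * (t * lam k)) * z0 k

open Filter Topology

theorem sq_intervalIntegral_zero_one_le {h : ℝ → ℝ} (hh : Continuous h) :
    (∫ t in (0:ℝ)..1, h t) ^ 2 ≤ ∫ t in (0:ℝ)..1, h t ^ 2 := by
  set a := ∫ t in (0:ℝ)..1, h t
  have hvar : 0 ≤ ∫ t in (0:ℝ)..1, (h t - a) ^ 2 :=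
    intervalIntegral.integral_nonneg zero_le_one fun t _ => sq_nonneg (h t - a)
  have hexpand : ∫ t in (0:ℝ)..1, (h t - a) ^ 2 = (∫ t in (0:ℝ)..1, h t ^ 2) - a ^ 2 := by
    simp only [sub_sq]
    rw [intervalIntegral.integral_add, intervalIntegral.integral_sub,
      intervalIntegral.integral_mul_const, intervalIntegral.integral_const_mul]
    · simp only [intervalIntegral.integral_const, sub_zero, one_smul]; ring
    all_goals exact (by fun_prop : Continuous _).intervalIntegrable _ _
  linarith

theorem sq_intervalIntegral_zero_one_add_le {f g : ℝ → ℝ} (hf : Continuous f) (hg : Continuous g) :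
    (∫ t in (0:ℝ)..1, (f t + g t)) ^ 2 ≤
      2 * ((∫ t in (0:ℝ)..1, f t ^ 2) + ∫ t in (0:ℝ)..1, g t ^ 2) := by
  calc (∫ t in (0:ℝ)..1, (f t + g t)) ^ 2 ≤ ∫ t in (0:ℝ)..1, (f t + g t) ^ 2 :=
        sq_intervalIntegral_zero_one_le (hf.add hg)
    _ ≤ ∫ t in (0:ℝ)..1, 2 * (f t ^ 2 + g t ^ 2) :=
        intervalIntegral.integral_mono_on zero_le_one
          ((by fun_prop : Continuous _).intervalIntegrable _ _)
          ((by fun_prop : Continuous _).intervalIntegrable _ _) fun t _ => add_sq_le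
    _ = _ := by
        rw [intervalIntegral.integral_const_mul, intervalIntegral.integral_add]
        all_goals exact (by fun_prop : Continuous _).intervalIntegrable _ _

theorem mul_norm_sq_indicator (a : ℕ → ℝ) (s : Set ℕ) (z : ℕ → ℂ) (k : ℕ) :
    a k * ‖s.indicator z k‖ ^ 2 = s.indicator (fun k => a k * ‖z k‖ ^ 2) k := by
  by_cases hk : k ∈ s <;> simp [hk]

namespace MemX2

variable {lam : ℕ → ℝ} {z : ℕ → ℂ}

theorem summable_norm_sq (hz : MemX2 lam z) (hlim : Tendsto lam atTop atTop) :
    Summable fun k => ‖z k‖ ^ 2 := by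
  refine Summable.of_norm_bounded_eventually hz ?_
  rw [Nat.cofinite_eq_atTop]
  filter_upwards [hlim.eventually_ge_atTop 1] with k hk
  rw [Real.norm_of_nonneg (by positivity)]
  exact le_mul_of_one_le_left (by positivity) (one_le_pow₀ hk)

theorem summable_sub_sq_mul (hz : MemX2 lam z) (hlim : Tendsto lam atTop atTop) (μ : ℝ) :
    Summable fun k => (lam k - μ) ^ 2 * ‖z k‖ ^ 2 := by
  refine Summable.of_nonneg_of_le (fun k => by positivity) (fun k => ?_)
    ((hz.mul_left 2).add ((hz.summable_norm_sq hlim).mul_left (2 * μ ^ 2)))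
  have : (lam k - μ) ^ 2 ≤ 2 * lam k ^ 2 + 2 * μ ^ 2 := by nlinarith [sq_nonneg (lam k + μ)]
  nlinarith [sq_nonneg ‖z k‖]

theorem of_finite_support {s : Finset ℕ} (hz : ∀ k ∉ s, z k = 0) : MemX2 lam z :=
  summable_of_ne_finset_zero (s := s) fun k hk => by simp [hz k hk]

theorem indicator (hz : MemX2 lam z) (s : Set ℕ) :
    MemX2 lam (s.indicator z) :=
  (Summable.indicator hz s).congr fun k => (mul_norm_sq_indicator _ s z k).symm

end MemX2

theorem tsum_norm_sq_le_of_gap {lam : ℕ → ℝ} {z : ℕ → ℂ} {μ ε : ℝ} (hε : 0 < ε)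
    (hgap : ∀ k, z k ≠ 0 → ε ≤ |μ - lam k|)
    (hsum : Summable fun k => (lam k - μ) ^ 2 * ‖z k‖ ^ 2) :
    ∑' k, ‖z k‖ ^ 2 ≤ ε⁻¹ ^ 2 * ∑' k, (lam k - μ) ^ 2 * ‖z k‖ ^ 2 := by
  have hpt : ∀ k, ‖z k‖ ^ 2 ≤ ε⁻¹ ^ 2 * ((lam k - μ) ^ 2 * ‖z k‖ ^ 2) := by
    intro k
    rcases eq_or_ne (z k) 0 with hzk | hzk
    · simp [hzk]
    have hε2 : ε ^ 2 ≤ (lam k - μ) ^ 2 := by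
      rw [← sq_abs (lam k - μ), abs_sub_comm]
      exact pow_le_pow_left₀ hε.le (hgap k hzk) 2
    rw [← mul_assoc, inv_pow, ← div_eq_inv_mul]
    exact le_mul_of_one_le_left (by positivity) ((one_le_div (by positivity)).2 hε2)
  rw [← tsum_mul_left]
  exact Summable.tsum_le_tsum hpt (Summable.of_nonneg_of_le (fun k => by positivity) hpt
    (hsum.mul_left _)) (hsum.mul_left _)

theorem tsum_mul_norm_sq_indicator_le {a : ℕ → ℝ} (ha : ∀ k, 0 ≤ a k) {z : ℕ → ℂ}
    (hsum : Summable fun k => a k * ‖z k‖ ^ 2) (s : Set ℕ) :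
    ∑' k, a k * ‖s.indicator z k‖ ^ 2 ≤ ∑' k, a k * ‖z k‖ ^ 2 := by
  simp_rw [mul_norm_sq_indicator]
  exact Summable.tsum_le_tsum (Set.indicator_le_self' fun k _ => mul_nonneg (ha k) (sq_nonneg _))
    (hsum.indicator s) hsum

theorem zEvol_zero (ν : ℕ → ℝ) (z : ℕ → ℂ) : zEvol ν z 0 = z := by
  funext k
  simp [zEvol]

section Observation

variable {Y : Type*} [NormedAddCommGroup Y] [NormedSpace ℂ Y]

theorem LinearMap.apply_eq_sum_single (C : (ℕ → ℂ) →ₗ[ℂ] Y) {s : Finset ℕ} {z : ℕ → ℂ}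
    (hz : ∀ k ∉ s, z k = 0) : C z = ∑ k ∈ s, z k • C (Pi.single k 1) := by
  have hsum : z = ∑ k ∈ s, z k • (Pi.single k 1 : ℕ → ℂ) := by
    funext j
    by_cases hj : j ∈ s
    · simp [Finset.sum_apply, Pi.single_apply, hj]
    · simp [Finset.sum_apply, Pi.single_apply, hj, hz j hj]
  conv_lhs => rw [hsum]
  simp only [map_sum, map_smul]

theorem map_zEvol_eq_sum (ν : ℕ → ℝ) (C : (ℕ → ℂ) →ₗ[ℂ] Y) {s : Finset ℕ} {z : ℕ → ℂ}
    (hz : ∀ k ∉ s, z k = 0) (t : ℝ) :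
    C (zEvol ν z t) =
      ∑ k ∈ s, (Complex.exp (Complex.I * (t * ν k)) * z k) • C (Pi.single k 1) :=
  C.apply_eq_sum_single fun k hk => by simp [zEvol, hz k hk]

theorem hasDerivAt_map_zEvol (ν : ℕ → ℝ) (C : (ℕ → ℂ) →ₗ[ℂ] Y) {s : Finset ℕ} {z : ℕ → ℂ}
    (hz : ∀ k ∉ s, z k = 0) (t : ℝ) :
    HasDerivAt (fun t => C (zEvol ν z t))
      (Complex.I • C (zEvol ν (fun k => ν k * z k) t)) t := by
  have hνz : ∀ k ∉ s, (ν k : ℂ) * z k = 0 := fun k hk => by simp [hz k hk]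
  rw [funext (map_zEvol_eq_sum ν C hz), map_zEvol_eq_sum ν C hνz, Finset.smul_sum]
  refine HasDerivAt.fun_sum fun k _ => ?_
  have hphase : HasDerivAt (fun t : ℝ => Complex.exp (Complex.I * (t * ν k)))
      (Complex.exp (Complex.I * (t * ν k)) * (Complex.I * ν k)) t := by
    simpa using ((Complex.ofRealCLM.hasDerivAt (x := t)).mul_const (ν k : ℂ)).const_mul
      Complex.I |>.cexp
  convert (hphase.mul_const (z k)).smul_const (C (Pi.single k 1)) using 1
  rw [smul_smul]
  ring_nf

theorem continuous_map_zEvol (ν : ℕ → ℝ) (C : (ℕ → ℂ) →ₗ[ℂ] Y) {s : Finset ℕ} {z : ℕ → ℂ}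
    (hz : ∀ k ∉ s, z k = 0) : Continuous fun t => C (zEvol ν z t) :=
  continuous_iff_continuousAt.2 fun t => (hasDerivAt_map_zEvol ν C hz t).continuousAt

theorem norm_map_zEvol_sub_const (lam : ℕ → ℝ) (μ : ℝ) (C : (ℕ → ℂ) →ₗ[ℂ] Y) (z : ℕ → ℂ)
    (t : ℝ) : ‖C (zEvol (fun k => lam k - μ) z t)‖ = ‖C (zEvol lam z t)‖ := by
  have hshift : zEvol (fun k => lam k - μ) z t =
      Complex.exp (-(Complex.I * (t * μ))) • zEvol lam z t := by
    funext k
    simp only [zEvol, Pi.smul_apply, smul_eq_mul, ← mul_assoc, ← Complex.exp_add]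
    push_cast
    ring_nf
  rw [hshift, map_smul, norm_smul, Complex.norm_exp]
  simp

theorem norm_le_intervalIntegral_of_finite_support [CompleteSpace Y] (ν : ℕ → ℝ)
    (C : (ℕ → ℂ) →ₗ[ℂ] Y) {s : Finset ℕ} {z : ℕ → ℂ} (hz : ∀ k ∉ s, z k = 0) :
    ‖C z‖ ≤ ∫ t in (0:ℝ)..1,
      (‖C (zEvol ν z t)‖ + ‖C (zEvol ν (fun k => ν k * z k) t)‖) := by
  have hνz : ∀ k ∉ s, (ν k : ℂ) * z k = 0 := fun k hk => by simp [hz k hk]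
  set G := fun t => C (zEvol ν z t)
  set G' := fun t => C (zEvol ν (fun k => ν k * z k) t)
  have hG : Continuous G := continuous_map_zEvol ν C hz
  have hG' : Continuous G' := continuous_map_zEvol ν C hνz
  set F' := fun t : ℝ => (1 - t) • (Complex.I • G' t) + (-1 : ℝ) • G t
  have hF : ∀ t, HasDerivAt (fun t : ℝ => (1 - t) • G t) (F' t) t := fun t =>
    ((hasDerivAt_id t).const_sub 1).smul (hasDerivAt_map_zEvol ν C hz t)
  have hFTC : ∫ t in (0:ℝ)..1, F' t = -C z := by
    rw [intervalIntegral.integral_eq_sub_of_hasDerivAt (fun t _ => hF t)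
      ((by fun_prop : Continuous F').intervalIntegrable _ _)]
    simp [G, zEvol_zero]
  calc ‖C z‖ = ‖∫ t in (0:ℝ)..1, F' t‖ := by rw [hFTC, norm_neg]
    _ ≤ ∫ t in (0:ℝ)..1, ‖F' t‖ := intervalIntegral.norm_integral_le_integral_norm zero_le_one
    _ ≤ ∫ t in (0:ℝ)..1, (‖G t‖ + ‖G' t‖) := by
      refine intervalIntegral.integral_mono_on zero_le_one
        ((by fun_prop : Continuous F').norm.intervalIntegrable _ _)
        ((hG.norm.add hG'.norm).intervalIntegrable _ _) fun t ht => ?_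
      calc ‖F' t‖ ≤ |1 - t| * ‖G' t‖ + ‖G t‖ := by
            refine (norm_add_le _ _).trans_eq ?_
            simp [norm_smul]
        _ ≤ 1 * ‖G' t‖ + ‖G t‖ := by
            gcongr
            exact abs_le.2 ⟨by linarith [ht.2], by linarith [ht.1]⟩
        _ = ‖G t‖ + ‖G' t‖ := by ring

theorem tendsto_map_indicator_finset {lam : ℕ → ℝ} {C : (ℕ → ℂ) →ₗ[ℂ] Y} {c : ℝ}
    (hbdd : ∀ z : ℕ → ℂ, MemX2 lam z →
      ‖C z‖ ≤ c * Real.sqrt (∑' k, (lam k)^2 * ‖z k‖^2))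
    {z : ℕ → ℂ} (hz : MemX2 lam z) :
    Tendsto (fun s : Finset ℕ => C ((s : Set ℕ).indicator z)) atTop (𝓝 (C z)) := by
  rw [tendsto_iff_norm_sub_tendsto_zero]
  have htail : ∀ s : Finset ℕ, ‖C ((s : Set ℕ).indicator z) - C z‖ ≤
      c * Real.sqrt (∑' k : {k // k ∉ s}, (lam k)^2 * ‖z k‖^2) := by
    intro s
    have hsum : ∑' k, (lam k)^2 * ‖(s : Set ℕ)ᶜ.indicator z k‖^2 =
        ∑' k : {k // k ∉ s}, (lam k)^2 * ‖z k‖^2 := by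
      rw [tsum_congr fun k => mul_norm_sq_indicator (fun k => lam k ^ 2) _ z k]
      exact (tsum_subtype _ _).symm
    rw [← map_sub, ← norm_neg, ← map_neg, neg_sub, ← Set.indicator_compl, ← hsum]
    exact hbdd _ (hz.indicator _)
  refine squeeze_zero (fun _ => norm_nonneg _) htail ?_
  simpa using ((Real.continuous_sqrt.tendsto 0).comp
    (tendsto_tsum_compl_atTop_zero fun k => (lam k)^2 * ‖z k‖^2)).const_mul c

theorem norm_sq_le_of_finite_support [CompleteSpace Y] {lam : ℕ → ℝ} {C : (ℕ → ℂ) →ₗ[ℂ] Y}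
    {K : ℝ} (hK : 0 ≤ K)
    (hadm : ∀ z0 : ℕ → ℂ, MemX2 lam z0 →
      (∫ t in (0:ℝ)..1, ‖C (zEvol lam z0 t)‖^2) ≤ K * ∑' k, ‖z0 k‖^2)
    {ε μ : ℝ} (hε : 0 < ε) {s : Finset ℕ} {z : ℕ → ℂ} (hz : ∀ k ∉ s, z k = 0)
    (hgap : ∀ k, z k ≠ 0 → ε ≤ |μ - lam k|) :
    ‖C z‖^2 ≤ 2 * K * (1 + ε⁻¹ ^ 2) * ∑' k, (lam k - μ)^2 * ‖z k‖^2 := by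
  set w : ℕ → ℂ := fun k => ((lam k - μ : ℝ) : ℂ) * z k
  have hw : ∀ k ∉ s, w k = 0 := fun k hk => by simp [w, hz k hk]
  have hnorm : ‖C z‖ ≤
      ∫ t in (0:ℝ)..1, (‖C (zEvol lam z t)‖ + ‖C (zEvol lam w t)‖) := by
    simpa only [norm_map_zEvol_sub_const] using
      norm_le_intervalIntegral_of_finite_support (fun k => lam k - μ) C hz
  have hwsum : ∑' k, ‖w k‖^2 = ∑' k, (lam k - μ)^2 * ‖z k‖^2 := by
    simp only [w, norm_mul, Complex.norm_real, Real.norm_eq_abs, mul_pow, sq_abs]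
  have hS : Summable fun k => (lam k - μ)^2 * ‖z k‖^2 :=
    summable_of_ne_finset_zero (s := s) fun k hk => by simp [hz k hk]
  calc ‖C z‖^2
      ≤ (∫ t in (0:ℝ)..1, (‖C (zEvol lam z t)‖ + ‖C (zEvol lam w t)‖))^2 :=
        pow_le_pow_left₀ (norm_nonneg _) hnorm 2
    _ ≤ 2 * ((∫ t in (0:ℝ)..1, ‖C (zEvol lam z t)‖^2) +
          ∫ t in (0:ℝ)..1, ‖C (zEvol lam w t)‖^2) :=
        sq_intervalIntegral_zero_one_add_le (continuous_map_zEvol lam C hz).norm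
          (continuous_map_zEvol lam C hw).norm
    _ ≤ 2 * (K * ∑' k, ‖z k‖^2 + K * ∑' k, ‖w k‖^2) := by
        gcongr
        exacts [hadm z (MemX2.of_finite_support hz), hadm w (MemX2.of_finite_support hw)]
    _ ≤ 2 * (K * (ε⁻¹ ^ 2 * ∑' k, (lam k - μ)^2 * ‖z k‖^2) +
          K * ∑' k, (lam k - μ)^2 * ‖z k‖^2) := by
        rw [hwsum]
        gcongr
        exact tsum_norm_sq_le_of_gap hε hgap hS
    _ = 2 * K * (1 + ε⁻¹ ^ 2) * ∑' k, (lam k - μ)^2 * ‖z k‖^2 := by ring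

end Observation

theorem stmt11_general (lam : ℕ → ℝ)
    (hlim : Filter.Tendsto lam Filter.atTop Filter.atTop)
    (Y : Type) [NormedAddCommGroup Y] [InnerProductSpace ℂ Y] [CompleteSpace Y]
    (C : (ℕ → ℂ) →ₗ[ℂ] Y)
    (c : ℝ)
    (hbdd : ∀ z : ℕ → ℂ, MemX2 lam z →
      ‖C z‖ ≤ c * Real.sqrt (∑' k, (lam k)^2 * ‖z k‖^2))
    (hadm : ∀ T : ℝ, 0 < T → ∃ K : ℝ, 0 < K ∧ ∀ z0 : ℕ → ℂ, MemX2 lam z0 →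
      (∫ t in (0:ℝ)..T, ‖C (zEvol lam z0 t)‖^2) ≤ K * ∑' k, ‖z0 k‖^2)
    (ε : ℝ) (hε : 0 < ε) :
    ∃ M : ℝ, 0 < M ∧ ∀ μ : ℝ, 0 ≤ μ → ∀ z : ℕ → ℂ, MemX2 lam z →
      (∀ k, z k ≠ 0 → ε ≤ |μ - lam k|) →
      ‖C z‖^2 ≤ M * ∑' k, (lam k - μ)^2 * ‖z k‖^2 := by
  obtain ⟨K, hK, hadm1⟩ := hadm 1 one_pos
  refine ⟨2 * K * (1 + ε⁻¹ ^ 2), by positivity, fun μ _ z hz hgap => ?_⟩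
  refine le_of_tendsto' ((tendsto_map_indicator_finset hbdd hz).norm.pow 2) fun s => ?_
  calc ‖C ((s : Set ℕ).indicator z)‖^2
      ≤ 2 * K * (1 + ε⁻¹ ^ 2) * ∑' k, (lam k - μ)^2 * ‖(s : Set ℕ).indicator z k‖^2 :=
        norm_sq_le_of_finite_support hK.le hadm1 hε (fun k hk => Set.indicator_of_notMem hk z)
          fun k hk => hgap k fun hzk => hk (by simp [hzk])
    _ ≤ 2 * K * (1 + ε⁻¹ ^ 2) * ∑' k, (lam k - μ)^2 * ‖z k‖^2 :=
        mul_le_mul_of_nonneg_left (tsum_mul_norm_sq_indicator_le (fun k => sq_nonneg _)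
          (hz.summable_sub_sq_mul hlim μ) _) (by positivity)

/-- Uniform wave-packet bound for admissible observation operators (Proposition 4.4). -/
theorem stmt11 (lam : ℕ → ℝ) (hmono : StrictMono lam) (hpos : ∀ k, 0 < lam k)
    (hlim : Filter.Tendsto lam Filter.atTop Filter.atTop)
    (Y : Type) [NormedAddCommGroup Y] [InnerProductSpace ℂ Y] [CompleteSpace Y]
    (C : (ℕ → ℂ) →ₗ[ℂ] Y)
    (c : ℝ) (hc : 0 ≤ c)
    (hbdd : ∀ z : ℕ → ℂ, MemX2 lam z →
      ‖C z‖ ≤ c * Real.sqrt (∑' k, (lam k)^2 * ‖z k‖^2))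
    (hadm : ∀ T : ℝ, 0 < T → ∃ K : ℝ, 0 < K ∧ ∀ z0 : ℕ → ℂ, MemX2 lam z0 →
      (∫ t in (0:ℝ)..T, ‖C (zEvol lam z0 t)‖^2) ≤ K * ∑' k, ‖z0 k‖^2)
    (ε : ℝ) (hε : 0 < ε) :
    ∃ M : ℝ, 0 < M ∧ ∀ μ : ℝ, 0 ≤ μ → ∀ z : ℕ → ℂ, MemX2 lam z →
      (∀ k, z k ≠ 0 → ε ≤ |μ - lam k|) →
      ‖C z‖^2 ≤ M * ∑' k, (lam k - μ)^2 * ‖z k‖^2 :=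
  stmt11_general lam hlim Y C c hbdd hadm ε hε
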